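/- arXiv:2409.08906 — 3 statements merged into one kernel-verified Lean document; each statement's English description precedes it below -/
import Mathlib

section
/- Let f : ℝ × ℝ → ℝ be a continuous, everywhere-positive probability density function on the plane (f > 0 and ∫∫ f(x,y) dx dy = 1), with marginal densities f_X(x) = ∫ f(x,y) dy and f_Y(y) = ∫ f(x,y) dx. Suppose there exist a constant σ_{Y|X} > 0 and functions μ_{Y|X} : ℝ → ℝ, μ_{X|Y} : ℝ → ℝ, σ_{X|Y} : ℝ → (0,∞) such that for all x, y: f(x,y) = f_X(x) · (1/(√(2π) σ_{Y|X})) exp(-(y - μ_{Y|X}(x))²/(2 σ_{Y|X}²)) and f(x,y) = f_Y(y) · (1/(√(2π) σ_{X|Y}(y))) exp(-(x - μ_{X|Y}(y))²/(2 σ_{X|Y}(y)²)). Then f is a bivariate normal density: there exist μ_X, μ_Y ∈ ℝ, σ_X, σ_Y > 0 and ρ ∈ (-1,1) such that for all x, y, f(x,y) = (1/(2π σ_X σ_Y √(1-ρ²))) exp( -[ (x-μ_X)²/σ_X² + (y-μ_Y)²/σ_Y² - 2ρ(x-μ_X)(y-μ_Y)/(σ_X σ_Y) ] / (2(1-ρ²))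 ). -/
open Real MeasureTheory


lemma gauss_int (b β γ : ℝ) (hb : 0 < b) :
    ∫ y : ℝ, Real.exp (-b*y^2 + β*y + γ) = Real.sqrt (π/b) * Real.exp (γ + β^2/(4*b)) := by
  have hb' : b ≠ 0 := hb.ne'
  have h1 : ∀ y:ℝ, -b*y^2+β*y+γ = -b*(y - β/(2*b))^2 + (γ + β^2/(4*b)) := by
    intro y; field_simp; ring
  calc ∫ y : ℝ, Real.exp (-b*y^2 + β*y + γ)
      = ∫ y : ℝ, Real.exp (-b*(y - β/(2*b))^2) * Real.exp (γ + β^2/(4*b)) := by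
        congr 1; funext y; rw [← Real.exp_add, ← h1 y]
    _ = (∫ y : ℝ, Real.exp (-b*(y - β/(2*b))^2)) * Real.exp (γ + β^2/(4*b)) := by
        rw [integral_mul_const]
    _ = Real.sqrt (π/b) * Real.exp (γ + β^2/(4*b)) := by
        rw [integral_sub_right_eq_self (fun y => Real.exp (-b*y^2)) (β/(2*b)), integral_gaussian]

lemma not_int (α β γ : ℝ) (hα : 0 ≤ α) :
    ¬ MeasureTheory.Integrable (fun x : ℝ => Real.exp (α*x^2 + β*x + γ)) := by
  intro h
  rcases le_or_gt 0 β with hβ | hβ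
  · have hr := h.restrict (s := Set.Ici (0:ℝ))
    have hc : Integrable (fun _ : ℝ => Real.exp γ) (volume.restrict (Set.Ici (0:ℝ))) := by
      apply hr.mono' aestronglyMeasurable_const
      filter_upwards [ae_restrict_mem measurableSet_Ici] with x hx
      rw [Real.norm_eq_abs, abs_of_pos (Real.exp_pos _)]
      apply Real.exp_le_exp.2
      have : (0:ℝ) ≤ x := hx
      nlinarith
    rw [integrable_const_iff] at hc
    rcases hc with hc | hc
    · exact (Real.exp_pos γ).ne' hc
    · replace hc := hc.measure_univ_lt_top; rw [Measure.restrict_apply_univ, Real.volume_Ici] at hc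
      exact (lt_irrefl _ hc)
  · have hr := h.restrict (s := Set.Iic (0:ℝ))
    have hc : Integrable (fun _ : ℝ => Real.exp γ) (volume.restrict (Set.Iic (0:ℝ))) := by
      apply hr.mono' aestronglyMeasurable_const
      filter_upwards [ae_restrict_mem measurableSet_Iic] with x hx
      rw [Real.norm_eq_abs, abs_of_pos (Real.exp_pos _)]
      apply Real.exp_le_exp.2
      have : x ≤ 0 := hx
      nlinarith
    rw [integrable_const_iff] at hc
    rcases hc with hc | hc
    · exact (Real.exp_pos γ).ne' hc
    · replace hc := hc.measure_univ_lt_top; rw [Measure.restrict_apply_univ, Real.volume_Iic] at hc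
      exact (lt_irrefl _ hc)


lemma int_eq_zero (a b c : ℝ) (ha : 0 ≤ a) : (∫ x : ℝ, Real.exp (a*x^2 + b*x + c)) = 0 :=
  MeasureTheory.integral_undef (not_int a b c ha)


set_option maxHeartbeats 2000000 in
lemma quad_form (a b c d e k : ℝ) (ha : 0 < a) (hb : 0 < b)
    (hα : 0 < a - c^2/(4*b))
    (hnorm : Real.sqrt (π/b) * (Real.sqrt (π/(a - c^2/(4*b))) *
      Real.exp ((k + e^2/(4*b)) + (d + e*c/(2*b))^2/(4*(a - c^2/(4*b))))) = 1) :
    ∃ μX μY σX σY ρ : ℝ, 0 < σX ∧ 0 < σY ∧ -1 < ρ ∧ ρ < 1 ∧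
      ∀ x y : ℝ, Real.exp (k + d*x + e*y - a*x^2 + c*x*y - b*y^2) =
        (1 / (2 * π * σX * σY * Real.sqrt (1 - ρ ^ 2))) *
          Real.exp (-((x - μX) ^ 2 / σX ^ 2 + (y - μY) ^ 2 / σY ^ 2 -
            2 * ρ * (x - μX) * (y - μY) / (σX * σY)) / (2 * (1 - ρ ^ 2))) := by
  obtain ⟨u, hu0, hu⟩ : ∃ u : ℝ, 0 < u ∧ a = u^2 :=
    ⟨Real.sqrt a, Real.sqrt_pos.2 ha, (Real.sq_sqrt ha.le).symm⟩
  obtain ⟨v, hv0, hv⟩ : ∃ v : ℝ, 0 < v ∧ b = v^2 :=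
    ⟨Real.sqrt b, Real.sqrt_pos.2 hb, (Real.sq_sqrt hb.le).symm⟩
  subst hu hv
  obtain ⟨w, hw0, hw⟩ : ∃ w : ℝ, 0 < w ∧ u^2 - c^2/(4*v^2) = w^2 :=
    ⟨Real.sqrt _, Real.sqrt_pos.2 hα, (Real.sq_sqrt hα.le).symm⟩
  rw [hw] at hα hnorm
  have hw4 : 4*u^2*v^2 - c^2 = 4*(v^2*w^2) := by
    field_simp at hw
    nlinarith [hw]
  have h4pos : 0 < 4*u^2*v^2 - c^2 := by
    have : (0:ℝ) < v^2*w^2 := by positivity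
    linarith
  set s2 : ℝ := Real.sqrt 2 with hs2def
  have hs20 : 0 < s2 := Real.sqrt_pos.2 (by norm_num)
  have hs2 : s2^2 = 2 := Real.sq_sqrt (by norm_num)
  rw [Real.sqrt_div pi_pos.le, Real.sqrt_div pi_pos.le, Real.sqrt_sq hv0.le,
    Real.sqrt_sq hw0.le] at hnorm
  have hp : Real.sqrt π * Real.sqrt π = π := Real.mul_self_sqrt pi_pos.le
  have hexpG : Real.exp ((k + e^2/(4*v^2)) + (d + e*c/(2*v^2))^2/(4*w^2)) = v*w/π := by
    generalize hEE : Real.exp ((k + e^2/(4*v^2)) + (d + e*c/(2*v^2))^2/(4*w^2)) = E at hnorm ⊢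
    rw [eq_div_iff pi_pos.ne']
    field_simp at hnorm
    linear_combination hnorm - E*hp
  refine ⟨(2*v^2*d + c*e)/(4*u^2*v^2 - c^2), (2*u^2*e + c*d)/(4*u^2*v^2 - c^2),
    1/(s2*w), u/(s2*v*w), c/(2*u*v), by positivity, by positivity, ?_, ?_, ?_⟩
  · have h1 : (c/(2*u*v))^2 < 1 := by
      rw [div_pow, div_lt_one (by positivity)]
      nlinarith [h4pos]
    nlinarith [h1]
  · have h1 : (c/(2*u*v))^2 < 1 := by
      rw [div_pow, div_lt_one (by positivity)]
      nlinarith [h4pos]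
    nlinarith [h1]
  · intro x y
    set μX : ℝ := (2*v^2*d + c*e)/(4*u^2*v^2 - c^2) with hμX
    set μY : ℝ := (2*u^2*e + c*d)/(4*u^2*v^2 - c^2) with hμY
    have hD : (4*u^2*v^2 - c^2) ≠ 0 := h4pos.ne'
    have h1ρ : 1 - (c/(2*u*v))^2 = (w/u)^2 := by
      field_simp
      linear_combination hw4
    have hsqrt : Real.sqrt (1 - (c/(2*u*v))^2) = w/u := by
      rw [h1ρ, Real.sqrt_sq (by positivity)]
    have hA : (1/(s2*w))^2 = 1/(2*w^2) := by
      rw [div_pow, one_pow, mul_pow, hs2]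
    have hB : (u/(s2*v*w))^2 = u^2/(2*(v^2*w^2)) := by
      rw [div_pow, mul_pow, mul_pow, hs2]; ring
    have hAB : (1/(s2*w))*(u/(s2*v*w)) = u/(2*(v*w^2)) := by
      rw [div_mul_div_comm, one_mul, show (s2*w)*(s2*v*w) = s2^2*(v*w^2) by ring, hs2]
    have hCmain : 2*π*(1/(s2*w))*(u/(s2*v*w))*(w/u) = π/(v*w) := by
      field_simp
      linear_combination (-1)*hs2
    have hC : (1:ℝ)/(2*π*(1/(s2*w))*(u/(s2*v*w))*(w/u)) = v*w/π := by
      rw [hCmain, one_div_div]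
    have hG : ((k + e^2/(4*v^2)) + (d + e*c/(2*v^2))^2/(4*w^2)) =
        k + (d*μX + e*μY - u^2*μX^2 + c*μX*μY - v^2*μY^2) := by
      have hw2 : w^2 = (4*u^2*v^2 - c^2)/(4*v^2) := by
        rw [hw4]; field_simp
      rw [hμX, hμY, hw2]
      generalize hDD : 4*u^2*v^2 - c^2 = D at hD ⊢
      field_simp
      linear_combination (16*v^2*e*d*c - 4*e^2*D + 16*v^2*u^2*e^2 + 16*v^4*d^2)*hDD
    have hrel1 : 2*u^2*μX - c*μY = d := by
      rw [hμX, hμY, mul_div_assoc', mul_div_assoc', div_sub_div_same, div_eq_iff hD]; ring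
    have hrel2 : 2*v^2*μY - c*μX = e := by
      rw [hμX, hμY, mul_div_assoc', mul_div_assoc', div_sub_div_same, div_eq_iff hD]; ring
    have expand : -((x - μX) ^ 2 / (1/(2*w^2)) + (y - μY) ^ 2 / (u^2/(2*(v^2*w^2))) -
          2 * (c/(2*u*v)) * (x - μX) * (y - μY) / (u/(2*(v*w^2)))) / (2 * ((w/u))^2) =
        -u^2*(x-μX)^2 + c*(x-μX)*(y-μY) - v^2*(y-μY)^2 := by
      field_simp
      ring
    have hE : -((x - μX) ^ 2 / (1/(s2*w)) ^ 2 + (y - μY) ^ 2 / (u/(s2*v*w)) ^ 2 -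
          2 * (c/(2*u*v)) * (x - μX) * (y - μY) / ((1/(s2*w)) * (u/(s2*v*w)))) / (2 * (1 - (c/(2*u*v)) ^ 2)) =
        (d*x + e*y - u^2*x^2 + c*x*y - v^2*y^2) -
          (d*μX + e*μY - u^2*μX^2 + c*μX*μY - v^2*μY^2) := by
      rw [hA, hB, hAB, h1ρ, expand]
      linear_combination (x - μX)*hrel1 + (y - μY)*hrel2
    rw [hsqrt, hC, hE, ← hexpG, ← Real.exp_add, hG]
    congr 1
    ring

/-- If a continuous, everywhere-positive planar probability density has Gaussian
conditionals in both directions, with the conditional standard deviation of `Y` given `X`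
constant, then it is a bivariate normal density. -/
theorem stmt_0
    (f : ℝ → ℝ → ℝ)
    (hcont : Continuous (fun p : ℝ × ℝ => f p.1 p.2))
    (hpos : ∀ x y, 0 < f x y)
    (hint : (∫ x : ℝ, ∫ y : ℝ, f x y) = 1)
    (σYX : ℝ) (hσYX : 0 < σYX)
    (μYX μXY : ℝ → ℝ) (σXY : ℝ → ℝ) (hσXY : ∀ y, 0 < σXY y)
    (h1 : ∀ x y, f x y =
      (∫ y' : ℝ, f x y') * (1 / (Real.sqrt (2 * π) * σYX)) *
        Real.exp (-(y - μYX x) ^ 2 / (2 * σYX ^ 2)))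
    (h2 : ∀ x y, f x y =
      (∫ x' : ℝ, f x' y) * (1 / (Real.sqrt (2 * π) * σXY y)) *
        Real.exp (-(x - μXY y) ^ 2 / (2 * (σXY y) ^ 2))) :
    ∃ μX μY σX σY ρ : ℝ, 0 < σX ∧ 0 < σY ∧ -1 < ρ ∧ ρ < 1 ∧
      ∀ x y, f x y =
        (1 / (2 * π * σX * σY * Real.sqrt (1 - ρ ^ 2))) *
          Real.exp (-((x - μX) ^ 2 / σX ^ 2 + (y - μY) ^ 2 / σY ^ 2 -
            2 * ρ * (x - μX) * (y - μY) / (σX * σY)) / (2 * (1 - ρ ^ 2))) := by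
  have hC1 : 0 < 1 / (Real.sqrt (2 * π) * σYX) :=
    one_div_pos.2 (mul_pos (Real.sqrt_pos.2 (by positivity)) hσYX)
  have hgx : ∀ x, 0 < (∫ y' : ℝ, f x y') := by
    intro x
    nlinarith [h1 x 0, hpos x 0, mul_pos hC1 (Real.exp_pos (-(0 - μYX x) ^ 2 / (2 * σYX ^ 2)))]
  have hhy : ∀ y, 0 < (∫ x' : ℝ, f x' y) := by
    intro y
    have hC2 : 0 < 1 / (Real.sqrt (2 * π) * σXY y) :=
      one_div_pos.2 (mul_pos (Real.sqrt_pos.2 (by positivity)) (hσXY y))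
    nlinarith [h2 0 y, hpos 0 y, mul_pos hC2 (Real.exp_pos (-(0 - μXY y) ^ 2 / (2 * (σXY y) ^ 2)))]
  have hfL : ∀ x y, f x y = Real.exp (Real.log (f x y)) := fun x y => (Real.exp_log (hpos x y)).symm
  have E1 : ∀ x y : ℝ, Real.log (f x y) =
      Real.log (f x 0) + (2*y*μYX x - y^2)/(2*σYX^2) := by
    intro x y
    have hne : (∫ y' : ℝ, f x y') * (1 / (Real.sqrt (2 * π) * σYX)) ≠ 0 :=
      (mul_pos (hgx x) hC1).ne'
    have e1 : ∀ z : ℝ, Real.log (f x z) =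
        Real.log ((∫ y' : ℝ, f x y') * (1 / (Real.sqrt (2 * π) * σYX))) +
          (-(z - μYX x) ^ 2 / (2 * σYX ^ 2)) := by
      intro z
      rw [h1 x z, Real.log_mul hne (Real.exp_pos _).ne', Real.log_exp]
    rw [e1 y, e1 0]
    field_simp
    ring
  have E2 : ∀ x y : ℝ, Real.log (f x y) =
      Real.log (f 0 y) + (2*x*μXY y - x^2)/(2*(σXY y)^2) := by
    intro x y
    have hC2 : 0 < 1 / (Real.sqrt (2 * π) * σXY y) :=
      one_div_pos.2 (mul_pos (Real.sqrt_pos.2 (by positivity)) (hσXY y))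
    have hne : (∫ x' : ℝ, f x' y) * (1 / (Real.sqrt (2 * π) * σXY y)) ≠ 0 :=
      (mul_pos (hhy y) hC2).ne'
    have e1 : ∀ z : ℝ, Real.log (f z y) =
        Real.log ((∫ x' : ℝ, f x' y) * (1 / (Real.sqrt (2 * π) * σXY y))) +
          (-(z - μXY y) ^ 2 / (2 * (σXY y) ^ 2)) := by
      intro z
      rw [h2 z y, Real.log_mul hne (Real.exp_pos _).ne', Real.log_exp]
    rw [e1 x, e1 0]
    have := (hσXY y).ne'
    field_simp
    ring
  have hsne : σYX ≠ 0 := hσYX.ne'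
  have hm : ∀ x : ℝ, μYX x = (σYX^2/2)*(Real.log (f x 1) - Real.log (f x (-1))) := by
    intro x
    rw [E1 x 1, E1 x (-1)]
    field_simp
    ring
  have hq : ∀ x : ℝ, μYX x = (σYX^2/2)*((Real.log (f 0 1) - Real.log (f 0 (-1))) +
      (μXY 1/(σXY 1)^2 - μXY (-1)/(σXY (-1))^2)*x +
      (1/(2*(σXY (-1))^2) - 1/(2*(σXY 1)^2))*x^2) := by
    intro x
    rw [hm x, E2 x 1, E2 x (-1)]
    have h1' := (hσXY 1).ne'
    have h2' := (hσXY (-1)).ne'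
    field_simp
    ring
  have hΔ2 : ∀ y : ℝ, Real.log (f 1 y) + Real.log (f (-1) y) - 2*Real.log (f 0 y) =
      -(1/(σXY y)^2) := by
    intro y
    rw [E2 1 y, E2 (-1) y]
    have := (hσXY y).ne'
    field_simp
    ring
  have hΔ1 : ∀ y : ℝ, Real.log (f 1 y) + Real.log (f (-1) y) - 2*Real.log (f 0 y) =
      (Real.log (f 1 0) + Real.log (f (-1) 0) - 2*Real.log (f 0 0)) +
        y*((μYX 1 + μYX (-1) - 2*μYX 0)/σYX^2) := by
    intro y
    rw [E1 1 y, E1 (-1) y, E1 0 y]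
    field_simp
    ring
  have key : μYX 1 + μYX (-1) - 2*μYX 0 = 0 := by
    by_contra hk
    have hK0 : (μYX 1 + μYX (-1) - 2*μYX 0)/σYX^2 ≠ 0 :=
      div_ne_zero hk (pow_ne_zero 2 hsne)
    have e1 := hΔ1 ((1 - (Real.log (f 1 0) + Real.log (f (-1) 0) - 2*Real.log (f 0 0)))/((μYX 1 + μYX (-1) - 2*μYX 0)/σYX^2))
    have e2 := hΔ2 ((1 - (Real.log (f 1 0) + Real.log (f (-1) 0) - 2*Real.log (f 0 0)))/((μYX 1 + μYX (-1) - 2*μYX 0)/σYX^2))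
    have e3 : (Real.log (f 1 0) + Real.log (f (-1) 0) - 2*Real.log (f 0 0)) +
        ((1 - (Real.log (f 1 0) + Real.log (f (-1) 0) - 2*Real.log (f 0 0)))/((μYX 1 + μYX (-1) - 2*μYX 0)/σYX^2))*((μYX 1 + μYX (-1) - 2*μYX 0)/σYX^2) = 1 := by
      rw [div_mul_cancel₀ _ hK0]
      ring
    have e4 : (0:ℝ) < 1/(σXY ((1 - (Real.log (f 1 0) + Real.log (f (-1) 0) - 2*Real.log (f 0 0)))/((μYX 1 + μYX (-1) - 2*μYX 0)/σYX^2)))^2 :=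
      one_div_pos.2 (pow_pos (hσXY _) 2)
    linarith
  have hc2 : (1/(2*(σXY (-1))^2) - 1/(2*(σXY 1)^2)) = 0 := by
    have k1 := hq 1
    have k2 := hq (-1)
    have k0 := hq 0
    have hs : (σYX^2 : ℝ) ≠ 0 := pow_ne_zero 2 hsne
    have hmain : σYX^2*(1/(2*(σXY (-1))^2) - 1/(2*(σXY 1)^2)) = 0 := by
      linear_combination key + 2*k0 - k1 - k2
    rcases mul_eq_zero.mp hmain with h' | h'
    · exact absurd h' hs
    · exact h'
  have hmlin : ∀ x : ℝ, μYX x = μYX 0 + x*(μYX 1 - μYX 0) := by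
    intro x
    have q1 := hq x
    have q2 := hq 0
    have q3 := hq 1
    linear_combination q1 - q2 - x*q3 + x*q2 + (σYX^2/2*(x^2 - x))*hc2
  have ht0 : σXY 0 ≠ 0 := (hσXY 0).ne'
  have hML : ∀ x y : ℝ, f x y = Real.exp (Real.log (f 0 0) + μXY 0/(σXY 0)^2*x +
      μYX 0/σYX^2*y - 1/(2*(σXY 0)^2)*x^2 + (μYX 1 - μYX 0)/σYX^2*x*y - 1/(2*σYX^2)*y^2) := by
    intro x y
    rw [hfL x y]
    congr 1
    rw [E1 x y, E2 x 0, hmlin x]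
    field_simp
    ring
  set a : ℝ := 1/(2*(σXY 0)^2) with hadef
  set b : ℝ := 1/(2*σYX^2) with hbdef
  set c : ℝ := (μYX 1 - μYX 0)/σYX^2 with hcdef
  set d : ℝ := μXY 0/(σXY 0)^2 with hddef
  set e : ℝ := μYX 0/σYX^2 with hedef
  set k : ℝ := Real.log (f 0 0) with hkdef
  have ha : 0 < a := by rw [hadef]; exact one_div_pos.2 (mul_pos two_pos (pow_pos (hσXY 0) 2))
  have hb : 0 < b := by rw [hbdef]; exact one_div_pos.2 (mul_pos two_pos (pow_pos hσYX 2))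
  have hgi : ∀ x : ℝ, (∫ y' : ℝ, f x y') =
      Real.sqrt (π/b) * Real.exp ((k + d*x - a*x^2) + (e + c*x)^2/(4*b)) := by
    intro x
    have hfun : (fun y' : ℝ => f x y') =
        fun y : ℝ => Real.exp (-b*y^2 + (e + c*x)*y + (k + d*x - a*x^2)) := by
      funext y
      rw [hML x y]
      congr 1
      ring
    show (∫ y' : ℝ, f x y') = _
    rw [hfun]
    exact gauss_int b (e + c*x) (k + d*x - a*x^2) hb
  have hrw : ∀ x : ℝ, (k + d*x - a*x^2) + (e + c*x)^2/(4*b) =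
      (-(a - c^2/(4*b)))*x^2 + (d + e*c/(2*b))*x + (k + e^2/(4*b)) := by
    intro x
    field_simp
    ring
  have hint'' : (∫ x : ℝ, Real.sqrt (π/b) *
      Real.exp ((-(a - c^2/(4*b)))*x^2 + (d + e*c/(2*b))*x + (k + e^2/(4*b)))) = 1 := by
    rw [← hint]
    congr 1
    funext x
    rw [hgi x, hrw x]
  have hint' : Real.sqrt (π/b) * (∫ x : ℝ, Real.exp ((-(a - c^2/(4*b)))*x^2 +
      (d + e*c/(2*b))*x + (k + e^2/(4*b)))) = 1 := by
    rw [← MeasureTheory.integral_const_mul]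
    exact hint''
  have hα : 0 < a - c^2/(4*b) := by
    by_contra hcon
    push_neg at hcon
    have hni := int_eq_zero (-(a - c^2/(4*b))) (d + e*c/(2*b)) (k + e^2/(4*b)) (by linarith)
    rw [hni, mul_zero] at hint'
    norm_num at hint'
  rw [gauss_int (a - c^2/(4*b)) (d + e*c/(2*b)) (k + e^2/(4*b)) hα] at hint'
  obtain ⟨μX, μY, σX, σY, ρ, p1, p2, p3, p4, p5⟩ := quad_form a b c d e k ha hb hα hint'
  exact ⟨μX, μY, σX, σY, ρ, p1, p2, p3, p4, fun x y => by rw [hML x y]; exact p5 x y⟩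
end

section
/- Let (Ω, ℙ) be a probability space, σ₀² > 0 and ᾱ ∈ (0,1) reals, and let X, E : Ω → ℝ be independent random variables with X ~ gaussianReal 0 σ₀² and E ~ gaussianReal 0 (1-ᾱ). Set X_t = √ᾱ · X + E and σ²_{0|t} = σ₀²(1-ᾱ)/((1-ᾱ) + σ₀² ᾱ). Then the conditional distribution of X given X_t satisfies: for (law of X_t)-almost every z ∈ ℝ, condDistrib X X_t ℙ (z) = gaussianReal ( σ²_{0|t} · (√ᾱ/(1-ᾱ)) · z ) ( σ²_{0|t} ), i.e. p(x₀ | x_t = z) is Gaussian with mean σ₀² √ᾱ z / ((1-ᾱ) + σ₀² ᾱ) and variance σ₀²(1-ᾱ)/((1-ᾱ) + σ₀² ᾱ). -/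
open MeasureTheory ProbabilityTheory Real
open scoped NNReal ENNReal

lemma gauss_key (v w : ℝ) (hv : 0 < v) (hw : 0 < w) (c x z : ℝ) :
    gaussianPDFReal 0 v.toNNReal x * gaussianPDFReal (c*x) w.toNNReal z =
    gaussianPDFReal 0 (c^2*v+w).toNNReal z *
      gaussianPDFReal ((v*c/(c^2*v+w))*z) (v*w/(c^2*v+w)).toNNReal x := by
  have hD : 0 < c^2*v+w := by positivity
  have hS : 0 < v*w/(c^2*v+w) := by positivity
  simp only [gaussianPDFReal, Real.coe_toNNReal _ hv.le, Real.coe_toNNReal _ hw.le,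
    Real.coe_toNNReal _ hD.le, Real.coe_toNNReal _ hS.le]
  have hconst : (√(2*π*v))⁻¹ * (√(2*π*w))⁻¹ = (√(2*π*(c^2*v+w)))⁻¹ * (√(2*π*(v*w/(c^2*v+w))))⁻¹ := by
    rw [← mul_inv, ← mul_inv, ← Real.sqrt_mul (by positivity), ← Real.sqrt_mul (by positivity)]
    congr 1
    field_simp
  have hexp : rexp (-(x-0)^2/(2*v)) * rexp (-(z-c*x)^2/(2*w)) =
      rexp (-(z-0)^2/(2*(c^2*v+w))) * rexp (-(x-(v*c/(c^2*v+w))*z)^2/(2*(v*w/(c^2*v+w)))) := by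
    rw [← Real.exp_add, ← Real.exp_add]
    congr 1
    field_simp
    ring
  calc (√(2*π*v))⁻¹ * rexp (-(x-0)^2/(2*v)) * ((√(2*π*w))⁻¹ * rexp (-(z-c*x)^2/(2*w)))
      = ((√(2*π*v))⁻¹ * (√(2*π*w))⁻¹) * (rexp (-(x-0)^2/(2*v)) * rexp (-(z-c*x)^2/(2*w))) := by ring
    _ = _ := by rw [hconst, hexp]; ring

lemma gaussPDF_key (v w : ℝ) (hv : 0 < v) (hw : 0 < w) (c x z : ℝ) :
    gaussianPDF 0 v.toNNReal x * gaussianPDF (c*x) w.toNNReal z =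
    gaussianPDF 0 (c^2*v+w).toNNReal z *
      gaussianPDF ((v*c/(c^2*v+w))*z) (v*w/(c^2*v+w)).toNNReal x := by
  simp only [gaussianPDF, ← ENNReal.ofReal_mul (gaussianPDFReal_nonneg _ _ _)]
  rw [gauss_key v w hv hw]

lemma measurable_gaussianPDF₂ (m : ℝ) (v : ℝ≥0) :
    Measurable (fun p : ℝ × ℝ => gaussianPDF (m * p.1) v p.2) := by
  apply Measurable.ennreal_ofReal
  simp only [gaussianPDFReal]
  fun_prop

/-- The Gaussian kernel with linear mean. -/
noncomputable def gaussKer (m : ℝ) (v : ℝ≥0) : Kernel ℝ ℝ where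
  toFun := fun z => gaussianReal (m * z) v
  measurable' := by
    refine Measure.measurable_of_measurable_coe _ fun s hs => ?_
    by_cases hv : v = 0
    · simp only [hv, gaussianReal_zero_var]
      simp_rw [Measure.dirac_apply' _ hs]
      exact (measurable_one.indicator hs).comp (measurable_const.mul measurable_id)
    · simp_rw [gaussianReal_apply _ hv]
      exact Measurable.lintegral_prod_right' (ν := volume.restrict s) (measurable_gaussianPDF₂ m v)

lemma gaussKer_apply (m : ℝ) (v : ℝ≥0) (z : ℝ) : gaussKer m v z = gaussianReal (m * z) v := rfl

instance (m : ℝ) (v : ℝ≥0) : IsMarkovKernel (gaussKer m v) :=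
  ⟨fun x => by rw [gaussKer_apply]; infer_instance⟩

/-- For a Gaussian prior `X ~ N(0, σ₀²)` and forward diffusion `X_t = √ᾱ·X + E` with
`E ~ N(0, 1-ᾱ)` independent of `X`, the conditional distribution of `X` given `X_t = z`
is Gaussian with mean `σ²_{0|t}·(√ᾱ/(1-ᾱ))·z` and variance
`σ²_{0|t} = σ₀²(1-ᾱ)/((1-ᾱ)+σ₀²ᾱ)`, for almost every `z`. -/
theorem stmt_11 {Ω : Type*} [MeasurableSpace Ω]
    (P : Measure Ω) [IsProbabilityMeasure P]
    (σ0sq a : ℝ) (hσ : 0 < σ0sq) (ha : 0 < a) (ha1 : a < 1)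
    (X E : Ω → ℝ) (hXm : Measurable X) (hEm : Measurable E)
    (hindep : IndepFun X E P)
    (hXlaw : P.map X = gaussianReal 0 σ0sq.toNNReal)
    (hElaw : P.map E = gaussianReal 0 (1 - a).toNNReal)
    (Xt : Ω → ℝ) (hXt : Xt = fun ω => Real.sqrt a * X ω + E ω)
    (s0t : ℝ) (hs0t : s0t = σ0sq * (1 - a) / ((1 - a) + σ0sq * a)) :
    ∀ᵐ z ∂(P.map Xt),
      condDistrib X Xt P z =
        gaussianReal (s0t * (Real.sqrt a / (1 - a)) * z) s0t.toNNReal := by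
  set c : ℝ := Real.sqrt a with hc_def
  have hc : 0 < c := Real.sqrt_pos.mpr ha
  have hc2 : c ^ 2 = a := Real.sq_sqrt ha.le
  have hw : (0:ℝ) < 1 - a := by linarith
  set D : ℝ := c ^ 2 * σ0sq + (1 - a) with hD_def
  have hD : 0 < D := by positivity
  have hS : 0 < s0t := by rw [hs0t]; positivity
  have hs0t' : s0t = σ0sq * (1 - a) / D := by
    rw [hs0t, hD_def, hc2]; ring_nf
  have hmean : s0t * (c / (1 - a)) = σ0sq * c / D := by
    rw [hs0t']; field_simp
  have hXtm : Measurable Xt := by rw [hXt]; fun_prop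
  -- the candidate kernel
  set κ : Kernel ℝ ℝ := gaussKer (s0t * (c / (1 - a))) s0t.toNNReal with hκ_def
  -- joint law of (X, E)
  have hXE : P.map (fun ω => (X ω, E ω)) =
      (gaussianReal 0 σ0sq.toNNReal).prod (gaussianReal 0 (1 - a).toNNReal) := by
    rw [← hXlaw, ← hElaw]
    exact (indepFun_iff_map_prod_eq_prod_map_map hXm.aemeasurable hEm.aemeasurable).mp hindep
  set g : ℝ × ℝ → ℝ × ℝ := fun p => (c * p.1 + p.2, p.1) with hg_def
  have hgm : Measurable g := by fun_prop
  have hjoint_map : P.map (fun ω => (Xt ω, X ω)) =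
      ((gaussianReal 0 σ0sq.toNNReal).prod (gaussianReal 0 (1 - a).toNNReal)).map g := by
    rw [← hXE, Measure.map_map hgm (hXm.prodMk hEm)]
    congr 1
    funext ω
    simp [hg_def, hXt, Function.comp]
  have hVne : σ0sq.toNNReal ≠ 0 := (Real.toNNReal_pos.mpr hσ).ne'
  have hWne : (1 - a).toNNReal ≠ 0 := (Real.toNNReal_pos.mpr hw).ne'
  have hDne : D.toNNReal ≠ 0 := (Real.toNNReal_pos.mpr hD).ne'
  have hSne : s0t.toNNReal ≠ 0 := (Real.toNNReal_pos.mpr hS).ne'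
  -- rectangle formula for the joint law
  have hrect : ∀ s t : Set ℝ, MeasurableSet s → MeasurableSet t →
      (P.map (fun ω => (Xt ω, X ω))) (s ×ˢ t) =
        ∫⁻ z in s, gaussianPDF 0 D.toNNReal z * κ z t := by
    intro s t hs ht
    classical
    rw [hjoint_map, Measure.map_apply hgm (hs.prod ht), Measure.prod_apply (hgm (hs.prod ht))]
    have hpre : ∀ x : ℝ, (Prod.mk x ⁻¹' (g ⁻¹' (s ×ˢ t))) =
        if x ∈ t then (fun e => c * x + e) ⁻¹' s else ∅ := by
      intro x
      ext e
      by_cases hx : x ∈ t <;> simp [hg_def, hx]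
    calc ∫⁻ x, (gaussianReal 0 (1 - a).toNNReal) (Prod.mk x ⁻¹' (g ⁻¹' (s ×ˢ t)))
            ∂(gaussianReal 0 σ0sq.toNNReal)
        = ∫⁻ x, t.indicator
            (fun x => (gaussianReal 0 (1 - a).toNNReal) ((fun e => c * x + e) ⁻¹' s)) x
            ∂(gaussianReal 0 σ0sq.toNNReal) := by
          refine lintegral_congr fun x => ?_
          rw [hpre x, Set.indicator_apply]
          split <;> simp
      _ = ∫⁻ x in t, (gaussianReal 0 (1 - a).toNNReal) ((fun e => c * x + e) ⁻¹' s)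
            ∂(gaussianReal 0 σ0sq.toNNReal) := by
          rw [lintegral_indicator ht]
      _ = ∫⁻ x in t, (∫⁻ z in s, gaussianPDF (c * x) (1 - a).toNNReal z)
            ∂(gaussianReal 0 σ0sq.toNNReal) := by
          refine lintegral_congr fun x => ?_
          rw [← Measure.map_apply (by fun_prop) hs, gaussianReal_map_const_add (c * x),
            zero_add, gaussianReal_apply _ hWne]
      _ = ∫⁻ x in t, gaussianPDF 0 σ0sq.toNNReal x
            * (∫⁻ z in s, gaussianPDF (c * x) (1 - a).toNNReal z) := by
          rw [gaussianReal_of_var_ne_zero _ hVne, restrict_withDensity ht,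
            lintegral_withDensity_eq_lintegral_mul _ (measurable_gaussianPDF _ _)
              (Measurable.lintegral_prod_right' (ν := volume.restrict s)
                (measurable_gaussianPDF₂ c (1 - a).toNNReal))]
          rfl
      _ = ∫⁻ x in t, (∫⁻ z in s, gaussianPDF 0 σ0sq.toNNReal x
            * gaussianPDF (c * x) (1 - a).toNNReal z) := by
          refine lintegral_congr fun x => ?_
          rw [lintegral_const_mul _ (measurable_gaussianPDF _ _)]
      _ = ∫⁻ z in s, (∫⁻ x in t, gaussianPDF 0 σ0sq.toNNReal x
            * gaussianPDF (c * x) (1 - a).toNNReal z) := by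
          rw [lintegral_lintegral_swap]
          exact (((measurable_gaussianPDF _ _).comp measurable_fst).mul
            (measurable_gaussianPDF₂ c _)).aemeasurable
      _ = ∫⁻ z in s, (∫⁻ x in t, gaussianPDF 0 D.toNNReal z
            * gaussianPDF (s0t * (c / (1 - a)) * z) s0t.toNNReal x) := by
          refine lintegral_congr fun z => lintegral_congr fun x => ?_
          rw [gaussPDF_key σ0sq (1 - a) hσ hw c x z, hmean, hs0t']
      _ = ∫⁻ z in s, gaussianPDF 0 D.toNNReal z * κ z t := by
          refine lintegral_congr fun z => ?_
          rw [lintegral_const_mul _ (measurable_gaussianPDF _ _), hκ_def, gaussKer_apply,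
            gaussianReal_apply _ hSne]
  -- marginal law of Xt
  have hXt_law : P.map Xt = gaussianReal 0 D.toNNReal := by
    ext s hs
    have : P.map Xt s = (P.map (fun ω => (Xt ω, X ω))) (s ×ˢ Set.univ) := by
      rw [Measure.map_apply (hXtm.prodMk hXm) (hs.prod MeasurableSet.univ),
        Measure.map_apply hXtm hs]
      congr 1
      ext ω; simp
    rw [this, hrect s Set.univ hs MeasurableSet.univ, gaussianReal_apply _ hDne]
    refine setLIntegral_congr_fun hs (fun z _ => ?_)
    have : κ z Set.univ = 1 := measure_univ
    rw [this, mul_one]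
  -- joint law equals compProd
  have hcompProd : P.map (fun ω => (Xt ω, X ω)) = (P.map Xt) ⊗ₘ κ := by
    have hP2 : IsProbabilityMeasure (P.map (fun ω => (Xt ω, X ω))) :=
      Measure.isProbabilityMeasure_map (hXtm.prodMk hXm).aemeasurable
    have hPXt : IsProbabilityMeasure (P.map Xt) := Measure.isProbabilityMeasure_map hXtm.aemeasurable
    refine ext_of_generate_finite _ generateFrom_prod.symm isPiSystem_prod ?_ (by simp)
    rintro _ ⟨s, hs, t, ht, rfl⟩
    simp only [Set.mem_setOf_eq] at hs ht
    rw [hrect s t hs ht, Measure.compProd_apply_prod hs ht, hXt_law,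
      gaussianReal_of_var_ne_zero _ hDne, restrict_withDensity hs,
      lintegral_withDensity_eq_lintegral_mul _ (measurable_gaussianPDF _ _)
        (κ.measurable_coe ht)]
    rfl
  have h := condDistrib_ae_eq_of_measure_eq_compProd_of_measurable (μ := P) hXtm hXm hcompProd
  filter_upwards [h] with z hz
  rw [hz, hκ_def, gaussKer_apply]
end

section
/- Let m, d ≥ 1, n = m·d, and let σ_n > 0 and σ ≥ 0 be reals. Let ω_n = exp(-2πi/n), and let F_n and F_m be the normalized DFT matrices of sizes n and m respectively (entries ω^{jk}/√size). Let h : Fin n → ℂ with DFT Λ(k) = Σ_{s=0}^{n-1} h(s) ω_n^{k·s}, let H = F_nᴴ · diag(Λ) · F_n (the circulant blur matrix), and let S be the m×n matrix with S_{j,l} = 1 if l = d·j and 0 otherwise (down-sampling by factor d). Define γ : Fin m → ℝ by γ_k = (1/d) Σ_{j=0}^{d-1} |Λ(k + j·m)|². Then σ_n² I_m + σ² · (S H)(S H)ᴴ = F_mᴴ · diag(σ_n² + σ² γ_k) · F_m; in particular this matrix is invertible with inverse F_mᴴ · diag( 1/(σ_n² + σ² γ_k) ) · F_m. -/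
open Real Matrix

private lemma pow_mod_eq {M : ℕ} (ω : ℂ) (hω1 : ω ^ M = 1) (s : ℕ) : ω ^ s = ω ^ (s % M) := by
  conv_lhs => rw [← Nat.div_add_mod s M]
  rw [pow_add, pow_mul, hω1, one_pow, one_mul]

private lemma pow_congr {M : ℕ} (ω : ℂ) (hω1 : ω ^ M = 1) {s t : ℕ}
    (hst : (s : ZMod M) = t) : ω ^ s = ω ^ t := by
  rcases Nat.eq_zero_or_pos M with hM | hM
  · subst hM
    have : s = t := by exact_mod_cast hst
    rw [this]
  · rw [pow_mod_eq ω hω1 s, pow_mod_eq ω hω1 t]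
    congr 1
    rwa [ZMod.natCast_eq_natCast_iff] at hst

private lemma prim_root {N : ℕ} (hN : 0 < N) {ω : ℂ}
    (hω : ω = Complex.exp (-2 * π * Complex.I / N)) : IsPrimitiveRoot ω N := by
  have := Complex.isPrimitiveRoot_exp N hN.ne'
  have h2 : ω = (Complex.exp (2 * π * Complex.I / N))⁻¹ := by
    rw [hω, ← Complex.exp_neg]; ring_nf
  rw [h2]; exact this.inv

private lemma conj_root {N : ℕ} {ω : ℂ}
    (hω : ω = Complex.exp (-2 * π * Complex.I / N)) : (starRingEnd ℂ) ω = ω⁻¹ := by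
  rw [hω, ← Complex.exp_conj, ← Complex.exp_neg]
  congr 1
  rw [map_div₀]
  simp only [_root_.map_mul, Complex.conj_I, Complex.conj_ofReal, Complex.conj_natCast,
    map_neg, Complex.conj_ofNat]
  ring

private lemma dft_orth {N : ℕ} (hN : 0 < N) {ω : ℂ}
    (hω : ω = Complex.exp (-2 * π * Complex.I / N)) (a b : Fin N) :
    ∑ l : Fin N, ω ^ ((a : ℕ) * l) * (starRingEnd ℂ) ω ^ ((b : ℕ) * l)
      = if a = b then (N : ℂ) else 0 := by
  have hprim : IsPrimitiveRoot ω N := prim_root hN hω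
  have hωN : ω ^ N = 1 := hprim.pow_eq_one
  have hω0 : ω ≠ 0 := by rw [hω]; exact Complex.exp_ne_zero _
  have hconj : (starRingEnd ℂ) ω = ω⁻¹ := conj_root hω
  have key : ∀ l : Fin N, ω ^ ((a : ℕ) * l) * (starRingEnd ℂ) ω ^ ((b : ℕ) * l)
      = (ω ^ (((a : ℤ) - b))) ^ (l : ℕ) := by
    intro l
    rw [hconj, ← zpow_natCast (ω ^ ((a:ℤ) - b)) (l : ℕ), ← _root_.zpow_mul,
      ← zpow_natCast ω ((a:ℕ)*l), inv_pow, ← zpow_natCast ω ((b:ℕ)*l), ← _root_.zpow_neg,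
      ← zpow_add₀ hω0]
    congr 1
    push_cast; ring
  simp_rw [key]
  rw [Fin.sum_univ_eq_sum_range]
  by_cases hab : a = b
  · subst hab
    simp
  · rw [if_neg hab]
    have hne : (a : ℕ) ≠ b := Fin.val_ne_of_ne hab
    have h2 : ((a : ℤ) - b) ≠ 0 := by
      have := a.isLt; have := b.isLt; omega
    have hz1 : ω ^ ((a : ℤ) - b) ≠ 1 := by
      rw [Ne, hprim.zpow_eq_one_iff_dvd]
      intro hdvd
      have hle : (N : ℤ) ≤ |(a : ℤ) - b| :=
        Int.le_of_dvd (abs_pos.mpr h2) ((dvd_abs _ _).mpr hdvd)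
      have hlt : |(a : ℤ) - b| < N := by
        rw [abs_lt]; have := a.isLt; have := b.isLt; omega
      omega
    have hzN : (ω ^ ((a : ℤ) - b)) ^ N = 1 := by
      rw [← zpow_natCast (ω ^ ((a:ℤ) - b)) N, ← _root_.zpow_mul, mul_comm, _root_.zpow_mul,
        zpow_natCast, hωN, _root_.one_zpow]
    rw [geom_sum_eq hz1, hzN, sub_self, zero_div]
private lemma dft_unitary {N : ℕ} (hN : 0 < N) {ω : ℂ}
    (hω : ω = Complex.exp (-2 * π * Complex.I / N)) {F : Matrix (Fin N) (Fin N) ℂ}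
    (hF : ∀ j k : Fin N, F j k = ω ^ ((j : ℕ) * (k : ℕ)) / (Real.sqrt N : ℂ)) :
    F * Fᴴ = 1 ∧ Fᴴ * F = 1 := by
  have hNne : (N : ℂ) ≠ 0 := Nat.cast_ne_zero.mpr hN.ne'
  have hsq : ((Real.sqrt N : ℝ) : ℂ) * ((Real.sqrt N : ℝ) : ℂ) = (N : ℂ) := by
    rw [← Complex.ofReal_mul, Real.mul_self_sqrt (Nat.cast_nonneg N)]; norm_cast
  constructor
  · ext j k
    rw [Matrix.mul_apply]
    have : ∀ l : Fin N, F j l * Fᴴ l k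
        = ω ^ ((j : ℕ) * l) * (starRingEnd ℂ) ω ^ ((k : ℕ) * l) / N := by
      intro l
      rw [Matrix.conjTranspose_apply, RCLike.star_def, hF, hF, map_div₀, map_pow,
        Complex.conj_ofReal, div_mul_div_comm, hsq]
    simp_rw [this]
    rw [← Finset.sum_div, dft_orth hN hω j k]
    by_cases hjk : j = k
    · subst hjk; rw [if_pos rfl, Matrix.one_apply_eq, div_self hNne]
    · rw [if_neg hjk, Matrix.one_apply_ne hjk, zero_div]
  · ext j k
    rw [Matrix.mul_apply]
    have : ∀ l : Fin N, Fᴴ j l * F l k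
        = ω ^ ((k : ℕ) * l) * (starRingEnd ℂ) ω ^ ((j : ℕ) * l) / N := by
      intro l
      rw [Matrix.conjTranspose_apply, RCLike.star_def, hF, hF, map_div₀, map_pow,
        Complex.conj_ofReal, div_mul_div_comm, hsq, mul_comm ((starRingEnd ℂ) ω ^ ((l:ℕ) * j)) _,
        mul_comm (l:ℕ) (j:ℕ), mul_comm (l:ℕ) (k:ℕ)]
    simp_rw [this]
    rw [← Finset.sum_div, dft_orth hN hω k j]
    by_cases hjk : j = k
    · subst hjk; rw [if_pos rfl, Matrix.one_apply_eq, div_self hNne]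
    · rw [if_neg (Ne.symm hjk), Matrix.one_apply_ne hjk, zero_div]

private theorem sr_key1 (m d n : ℕ) (hm : 1 ≤ m) (hd : 1 ≤ d) (hn : n = m * d)
    (ωn : ℂ) (Λ : ℕ → ℂ)
    (Fn : Matrix (Fin n) (Fin n) ℂ)
    (hFn1 : Fn * Fnᴴ = 1)
    (H : Matrix (Fin n) (Fin n) ℂ)
    (hH : H = Fnᴴ * Matrix.diagonal (fun k : Fin n => Λ (k : ℕ)) * Fn)
    (S : Matrix (Fin m) (Fin n) ℂ) :
    (S * H) * (S * H)ᴴ = S * (Fnᴴ * (Matrix.diagonal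
      (fun k : Fin n => Λ (k : ℕ) * star (Λ (k : ℕ))) * (Fn * Sᴴ))) := by
  have cancel : ∀ X : Matrix (Fin n) (Fin m) ℂ, Fn * (Fnᴴ * X) = X := by
    intro X; rw [← Matrix.mul_assoc, hFn1, Matrix.one_mul]
  rw [hH]
  simp only [Matrix.conjTranspose_mul, Matrix.conjTranspose_conjTranspose,
    Matrix.diagonal_conjTranspose, Matrix.mul_assoc]
  rw [cancel, ← Matrix.mul_assoc (Matrix.diagonal _) (Matrix.diagonal _),
    Matrix.diagonal_mul_diagonal]
  rfl

private theorem sr_key2 (m d n : ℕ) (hm : 1 ≤ m) (hd : 1 ≤ d) (hn : n = m * d)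
    (ωn ωm : ℂ)
    (hωn : ωn = Complex.exp (-2 * π * Complex.I / n))
    (hωm : ωm = Complex.exp (-2 * π * Complex.I / m))
    (Fn : Matrix (Fin n) (Fin n) ℂ)
    (hFn : ∀ j k : Fin n, Fn j k = ωn ^ ((j : ℕ) * (k : ℕ)) / (Real.sqrt n : ℂ))
    (Fm : Matrix (Fin m) (Fin m) ℂ)
    (hFm : ∀ j k : Fin m, Fm j k = ωm ^ ((j : ℕ) * (k : ℕ)) / (Real.sqrt m : ℂ))
    (Λ : ℕ → ℂ)
    (S : Matrix (Fin m) (Fin n) ℂ)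
    (hS : ∀ j l, S j l = if (l : ℕ) = d * (j : ℕ) then 1 else 0)
    (γ : Fin m → ℝ)
    (hγ : ∀ k : Fin m,
      γ k = (1 / d) * ∑ j ∈ Finset.range d, ‖Λ ((k : ℕ) + j * m)‖ ^ 2) :
    S * (Fnᴴ * (Matrix.diagonal (fun k : Fin n => Λ (k : ℕ) * star (Λ (k : ℕ))) * (Fn * Sᴴ)))
      = Fmᴴ * Matrix.diagonal (fun k : Fin m => ((γ k : ℝ) : ℂ)) * Fm := by
  have hm0 : 0 < m := hm
  have hd0 : 0 < d := hd
  have hn0 : 0 < n := by rw [hn]; positivity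
  have hdm : d * m = n := by rw [hn, Nat.mul_comm]
  have hmC : (m : ℂ) ≠ 0 := Nat.cast_ne_zero.mpr hm0.ne'
  have hdC : (d : ℂ) ≠ 0 := Nat.cast_ne_zero.mpr hd0.ne'
  have hnC : (n : ℂ) ≠ 0 := Nat.cast_ne_zero.mpr hn0.ne'
  have hdR : (d : ℝ) ≠ 0 := Nat.cast_ne_zero.mpr hd0.ne'
  have hsqn : ((Real.sqrt n : ℝ) : ℂ) * ((Real.sqrt n : ℝ) : ℂ) = (n : ℂ) := by
    rw [← Complex.ofReal_mul, Real.mul_self_sqrt (Nat.cast_nonneg n)]; norm_cast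
  have hsqm : ((Real.sqrt m : ℝ) : ℂ) * ((Real.sqrt m : ℝ) : ℂ) = (m : ℂ) := by
    rw [← Complex.ofReal_mul, Real.mul_self_sqrt (Nat.cast_nonneg m)]; norm_cast
  have hsqnne : ((Real.sqrt n : ℝ) : ℂ) ≠ 0 := by
    intro hc; rw [hc, zero_mul] at hsqn; exact hnC hsqn.symm
  have hsqmne : ((Real.sqrt m : ℝ) : ℂ) ≠ 0 := by
    intro hc; rw [hc, zero_mul] at hsqm; exact hmC hsqm.symm
  have hωnn : ωn ^ n = 1 := (prim_root hn0 hωn).pow_eq_one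
  have hωmm : ωm ^ m = 1 := (prim_root hm0 hωm).pow_eq_one
  have hconjn : (starRingEnd ℂ) ωn = ωn ^ (n - 1) := by
    have h1 : ωn ^ (n - 1) * ωn = 1 := by
      rw [← pow_succ, Nat.sub_add_cancel hn0, hωnn]
    rw [conj_root hωn, ← eq_inv_of_mul_eq_one_left h1]
  have hconjm : (starRingEnd ℂ) ωm = ωm ^ (m - 1) := by
    have h1 : ωm ^ (m - 1) * ωm = 1 := by
      rw [← pow_succ, Nat.sub_add_cancel hm0, hωmm]
    rw [conj_root hωm, ← eq_inv_of_mul_eq_one_left h1]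
  have hωd : ωn ^ d = ωm := by
    rw [hωn, hωm, ← Complex.exp_nat_mul]
    congr 1
    have hnc : (n : ℂ) = (m : ℂ) * d := by exact_mod_cast hn
    field_simp [hnc]
    linear_combination hnc
  have hflt : ∀ a : Fin m, d * (a : ℕ) < n := by
    intro a; rw [← hdm]; exact (Nat.mul_lt_mul_left hd0).mpr a.isLt
  set f : Fin m → Fin n := fun a => ⟨d * a, hflt a⟩ with hf
  have hSmul : ∀ (X : Matrix (Fin n) (Fin m) ℂ) (a b : Fin m),
      (S * X) a b = X (f a) b := by
    intro X a b
    rw [Matrix.mul_apply, Finset.sum_eq_single (f a)]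
    · rw [hS]; simp [hf]
    · intro t _ ht
      rw [hS, if_neg, zero_mul]
      intro hc; exact ht (Fin.ext hc)
    · intro hc; exact absurd (Finset.mem_univ _) hc
  have hmulS : ∀ (X : Matrix (Fin n) (Fin n) ℂ) (l : Fin n) (a : Fin m),
      (X * Sᴴ) l a = X l (f a) := by
    intro X l a
    rw [Matrix.mul_apply, Finset.sum_eq_single (f a)]
    · rw [Matrix.conjTranspose_apply, hS]; simp [hf]
    · intro t _ ht
      rw [Matrix.conjTranspose_apply, hS, if_neg, star_zero, mul_zero]
      intro hc; exact ht (Fin.ext hc)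
    · intro hc; exact absurd (Finset.mem_univ _) hc
  set e : Fin d × Fin m ≃ Fin n := finProdFinEquiv.trans (finCongr hdm) with he
  have hkv : ∀ (j : Fin d) (r : Fin m), ((e (j, r) : Fin n) : ℕ) = (r : ℕ) + m * j := by
    intro j r
    simp [he, finProdFinEquiv]
  ext a b
  calc (S * (Fnᴴ * (Matrix.diagonal (fun k : Fin n => Λ (k : ℕ) * star (Λ (k : ℕ))) * (Fn * Sᴴ)))) a b
      = ∑ k : Fin n, ωn ^ ((n - 1) * ((k : ℕ) * (d * (a : ℕ))) + (k : ℕ) * (d * (b : ℕ)))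
          * (Λ (k : ℕ) * star (Λ (k : ℕ))) / n := by
        rw [hSmul, Matrix.mul_apply]
        refine Finset.sum_congr rfl fun k _ => ?_
        rw [Matrix.conjTranspose_apply, Matrix.diagonal_mul, hmulS, RCLike.star_def,
          hFn, hFn, map_div₀, map_pow, Complex.conj_ofReal, hconjn]
        have hfa : ((f a : Fin n) : ℕ) = d * (a : ℕ) := rfl
        have hfb : ((f b : Fin n) : ℕ) = d * (b : ℕ) := rfl
        rw [hfa, hfb, pow_add, pow_mul]
        field_simp
        rw [sq, hsqn, ← pow_mul, ← pow_mul]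
        ring
    _ = ∑ r : Fin m, ∑ j : Fin d,
          ωn ^ ((n - 1) * (((e (j, r) : Fin n) : ℕ) * (d * (a : ℕ)))
            + ((e (j, r) : Fin n) : ℕ) * (d * (b : ℕ)))
          * (Λ ((e (j, r) : Fin n) : ℕ) * star (Λ ((e (j, r) : Fin n) : ℕ))) / n := by
        rw [← Equiv.sum_comp e (fun k : Fin n => ωn ^ ((n - 1) * ((k : ℕ) * (d * (a : ℕ)))
          + (k : ℕ) * (d * (b : ℕ))) * (Λ (k : ℕ) * star (Λ (k : ℕ))) / n),
          Fintype.sum_prod_type, Finset.sum_comm]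
    _ = ∑ r : Fin m, (starRingEnd ℂ) (Fm r a) * (((γ r : ℝ) : ℂ) * Fm r b) := by
        refine Finset.sum_congr rfl fun r _ => ?_
        have hexp : ∀ j : Fin d,
            ωn ^ ((n - 1) * (((e (j, r) : Fin n) : ℕ) * (d * (a : ℕ)))
              + ((e (j, r) : Fin n) : ℕ) * (d * (b : ℕ)))
            = ωn ^ (d * ((m - 1) * ((r : ℕ) * (a : ℕ))) + d * ((r : ℕ) * (b : ℕ))) := by
          intro j
          apply pow_congr ωn hωnn
          have hmd0 : ((m : ZMod n) * (d : ZMod n)) = 0 := by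
            rw [← Nat.cast_mul, ← hn, ZMod.natCast_self]
          push_cast [hkv j r, Nat.cast_sub hm, Nat.cast_sub hn0]
          rw [ZMod.natCast_self]
          linear_combination ((j : ZMod n) * b - (j : ZMod n) * a - (r : ZMod n) * a) * hmd0
        simp_rw [hexp, hkv]
        rw [← Finset.sum_div, ← Finset.mul_sum]
        have hsum : ∑ j : Fin d, Λ ((r : ℕ) + m * j) * star (Λ ((r : ℕ) + m * j))
            = (((d : ℝ) * γ r : ℝ) : ℂ) := by
          have h1 : ∀ j : Fin d, Λ ((r : ℕ) + m * j) * star (Λ ((r : ℕ) + m * j))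
              = ((‖Λ ((r : ℕ) + (j : ℕ) * m)‖ ^ 2 : ℝ) : ℂ) := by
            intro j
            rw [Nat.mul_comm m (j : ℕ), Complex.star_def, Complex.mul_conj,
              Complex.normSq_eq_norm_sq]
          simp_rw [h1]
          rw [← Complex.ofReal_sum]
          norm_cast
          rw [Fin.sum_univ_eq_sum_range (fun j => ‖Λ ((r : ℕ) + j * m)‖ ^ 2) d,
            hγ r]
          field_simp
        rw [hsum, hFm, hFm, map_div₀, map_pow, Complex.conj_ofReal, hconjm]
        rw [show ωn ^ (d * ((m - 1) * ((r : ℕ) * (a : ℕ))) + d * ((r : ℕ) * (b : ℕ)))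
            = ωm ^ ((m - 1) * ((r : ℕ) * (a : ℕ))) * ωm ^ ((r : ℕ) * (b : ℕ)) from by
          rw [pow_add, pow_mul ωn d ((m - 1) * ((r : ℕ) * (a : ℕ))),
            pow_mul ωn d ((r : ℕ) * (b : ℕ)), hωd]]
        have hnc : (n : ℂ) = (m : ℂ) * d := by exact_mod_cast hn
        rw [pow_mul]
        push_cast
        field_simp [hnc]
        rw [sq, hsqm, hnc]
        ring
    _ = (Fmᴴ * Matrix.diagonal (fun k : Fin m => ((γ k : ℝ) : ℂ)) * Fm) a b := by
        rw [Matrix.mul_assoc, Matrix.mul_apply]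
        refine Finset.sum_congr rfl fun r _ => ?_
        rw [Matrix.conjTranspose_apply, Matrix.diagonal_mul, RCLike.star_def]

private theorem sr_final (m : ℕ) (σn σ : ℝ) (hσn : 0 < σn) (hσ : 0 ≤ σ)
    (Fm : Matrix (Fin m) (Fin m) ℂ)
    (hFm1 : Fm * Fmᴴ = 1) (hFm2 : Fmᴴ * Fm = 1)
    (γ : Fin m → ℝ) (hγpos : ∀ k, 0 ≤ γ k)
    (A : Matrix (Fin m) (Fin m) ℂ)
    (hkey : A = Fmᴴ * Matrix.diagonal (fun k : Fin m => ((γ k : ℝ) : ℂ)) * Fm) :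
    (σn : ℂ) ^ 2 • (1 : Matrix (Fin m) (Fin m) ℂ) + (σ : ℂ) ^ 2 • A =
      Fmᴴ * Matrix.diagonal (fun k => ((σn ^ 2 + σ ^ 2 * γ k : ℝ) : ℂ)) * Fm ∧
    IsUnit ((σn : ℂ) ^ 2 • (1 : Matrix (Fin m) (Fin m) ℂ) + (σ : ℂ) ^ 2 • A) ∧
    ((σn : ℂ) ^ 2 • (1 : Matrix (Fin m) (Fin m) ℂ) + (σ : ℂ) ^ 2 • A)⁻¹ =
      Fmᴴ * Matrix.diagonal (fun k => ((1 / (σn ^ 2 + σ ^ 2 * γ k) : ℝ) : ℂ)) * Fm := by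
  have hpos : ∀ k, 0 < σn ^ 2 + σ ^ 2 * γ k := by
    intro k
    have := hγpos k
    positivity
  have h1 : (σn : ℂ) ^ 2 • (1 : Matrix (Fin m) (Fin m) ℂ) + (σ : ℂ) ^ 2 • A =
      Fmᴴ * Matrix.diagonal (fun k => ((σn ^ 2 + σ ^ 2 * γ k : ℝ) : ℂ)) * Fm := by
    rw [hkey]
    have e1 : (σn : ℂ) ^ 2 • (1 : Matrix (Fin m) (Fin m) ℂ)
        = Fmᴴ * ((σn : ℂ) ^ 2 • (1 : Matrix (Fin m) (Fin m) ℂ)) * Fm := by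
      rw [Matrix.mul_smul, Matrix.smul_mul, Matrix.mul_one, hFm2]
    have e2 : (σ : ℂ) ^ 2 • (Fmᴴ * Matrix.diagonal (fun k : Fin m => ((γ k : ℝ) : ℂ)) * Fm)
        = Fmᴴ * ((σ : ℂ) ^ 2 • Matrix.diagonal (fun k : Fin m => ((γ k : ℝ) : ℂ))) * Fm := by
      rw [Matrix.mul_smul, Matrix.smul_mul]
    rw [e1, e2, ← Matrix.add_mul, ← Matrix.mul_add]
    congr 1
    congr 1
    ext i j
    by_cases hij : i = j
    · subst hij
      simp [Matrix.diagonal_apply_eq, Matrix.one_apply_eq]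
    · simp [Matrix.one_apply_ne hij, Matrix.diagonal_apply_ne _ hij]
  have cancel : ∀ X : Matrix (Fin m) (Fin m) ℂ, Fm * (Fmᴴ * X) = X := fun X => by
    rw [← Matrix.mul_assoc, hFm1, Matrix.one_mul]
  have hmulinv : ∀ (c c' : Fin m → ℂ), (∀ k, c k * c' k = 1) →
      (Fmᴴ * Matrix.diagonal c * Fm) * (Fmᴴ * Matrix.diagonal c' * Fm) = 1 := by
    intro c c' hcc
    simp only [Matrix.mul_assoc]
    rw [cancel, ← Matrix.mul_assoc (Matrix.diagonal c), Matrix.diagonal_mul_diagonal]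
    have hone : (fun k => c k * c' k) = fun _ => (1 : ℂ) := funext hcc
    rw [hone, Matrix.diagonal_one, Matrix.one_mul, hFm2]
  have hAB : (Fmᴴ * Matrix.diagonal (fun k => ((σn ^ 2 + σ ^ 2 * γ k : ℝ) : ℂ)) * Fm) *
      (Fmᴴ * Matrix.diagonal (fun k => ((1 / (σn ^ 2 + σ ^ 2 * γ k) : ℝ) : ℂ)) * Fm) = 1 := by
    apply hmulinv
    intro k
    rw [← Complex.ofReal_mul, mul_one_div_cancel (hpos k).ne', Complex.ofReal_one]
  have hBA : (Fmᴴ * Matrix.diagonal (fun k => ((1 / (σn ^ 2 + σ ^ 2 * γ k) : ℝ) : ℂ)) * Fm) *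
      (Fmᴴ * Matrix.diagonal (fun k => ((σn ^ 2 + σ ^ 2 * γ k : ℝ) : ℂ)) * Fm) = 1 := by
    apply hmulinv
    intro k
    rw [← Complex.ofReal_mul, one_div_mul_cancel (hpos k).ne', Complex.ofReal_one]
  refine ⟨h1, ?_, ?_⟩
  · rw [h1]
    exact ⟨⟨_, _, hAB, hBA⟩, rfl⟩
  · rw [h1]
    exact Matrix.inv_eq_left_inv hBA

/-- For the super-resolution forward operator `S·H` (circulant blur `H = F_nᴴ diag(Λ) F_n`
followed by down-sampling `S` by a factor `d`, `n = m·d`), the likelihood covariance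
`σ_n² I + σ² (SH)(SH)ᴴ` equals `F_mᴴ diag(σ_n² + σ² γ_k) F_m` where
`γ_k = (1/d) Σ_{j<d} |Λ(k+jm)|²`; in particular it is invertible with inverse
`F_mᴴ diag(1/(σ_n² + σ² γ_k)) F_m`. -/
theorem stmt_18 (m d n : ℕ) (hm : 1 ≤ m) (hd : 1 ≤ d) (hn : n = m * d)
    (σn σ : ℝ) (hσn : 0 < σn) (hσ : 0 ≤ σ)
    (ωn ωm : ℂ)
    (hωn : ωn = Complex.exp (-2 * π * Complex.I / n))
    (hωm : ωm = Complex.exp (-2 * π * Complex.I / m))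
    (Fn : Matrix (Fin n) (Fin n) ℂ)
    (hFn : ∀ j k : Fin n, Fn j k = ωn ^ ((j : ℕ) * (k : ℕ)) / (Real.sqrt n : ℂ))
    (Fm : Matrix (Fin m) (Fin m) ℂ)
    (hFm : ∀ j k : Fin m, Fm j k = ωm ^ ((j : ℕ) * (k : ℕ)) / (Real.sqrt m : ℂ))
    (h : Fin n → ℂ) (Λ : ℕ → ℂ)
    (hΛ : ∀ k : ℕ, Λ k = ∑ s : Fin n, h s * ωn ^ (k * (s : ℕ)))
    (H : Matrix (Fin n) (Fin n) ℂ)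
    (hH : H = Fnᴴ * Matrix.diagonal (fun k : Fin n => Λ (k : ℕ)) * Fn)
    (S : Matrix (Fin m) (Fin n) ℂ)
    (hS : ∀ j l, S j l = if (l : ℕ) = d * (j : ℕ) then 1 else 0)
    (γ : Fin m → ℝ)
    (hγ : ∀ k : Fin m,
      γ k = (1 / d) * ∑ j ∈ Finset.range d, ‖Λ ((k : ℕ) + j * m)‖ ^ 2) :
    (σn : ℂ) ^ 2 • (1 : Matrix (Fin m) (Fin m) ℂ) + (σ : ℂ) ^ 2 • ((S * H) * (S * H)ᴴ) =
      Fmᴴ * Matrix.diagonal (fun k => ((σn ^ 2 + σ ^ 2 * γ k : ℝ) : ℂ)) * Fm ∧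
    IsUnit ((σn : ℂ) ^ 2 • (1 : Matrix (Fin m) (Fin m) ℂ) +
      (σ : ℂ) ^ 2 • ((S * H) * (S * H)ᴴ)) ∧
    ((σn : ℂ) ^ 2 • (1 : Matrix (Fin m) (Fin m) ℂ) + (σ : ℂ) ^ 2 • ((S * H) * (S * H)ᴴ))⁻¹ =
      Fmᴴ * Matrix.diagonal (fun k => ((1 / (σn ^ 2 + σ ^ 2 * γ k) : ℝ) : ℂ)) * Fm := by
  have hm0 : 0 < m := hm
  have hn0 : 0 < n := by rw [hn]; positivity
  obtain ⟨hFn1, _⟩ := dft_unitary hn0 hωn hFn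
  obtain ⟨hFm1, hFm2⟩ := dft_unitary hm0 hωm hFm
  have hγpos : ∀ k, 0 ≤ γ k := by
    intro k
    rw [hγ]
    positivity
  have hA : (S * H) * (S * H)ᴴ
      = Fmᴴ * Matrix.diagonal (fun k : Fin m => ((γ k : ℝ) : ℂ)) * Fm :=
    (sr_key1 m d n hm hd hn ωn Λ Fn hFn1 H hH S).trans
      (sr_key2 m d n hm hd hn ωn ωm hωn hωm Fn hFn Fm hFm Λ S hS γ hγ)
  exact sr_final m σn σ hσn hσ Fm hFm1 hFm2 γ hγpos _ hA
end
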